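/- Let t ≥ 27, k ∈ {t-1,t}, and let y ≥ t+k+5 with y ≡ t+k-1 (mod 2). Suppose g is an integer with g_{t,k} + g(y,t,k) ≤ g ≤ -1 + g_{t+1,k+1} + g(t+k+7,t+1,k+1). Then (y+1)² ≤ 20t², i.e. y ≤ √20·t - 1. -/

import Mathlib

def bin3 (n : ℤ) : ℤ := n*(n-1)*(n-2)/6
def dtk (t k : ℤ) : ℤ := t*(t+1)/2 + k*(k+1)/2
def gtk (t k : ℤ) : ℤ := 2 + t*(t+1)*(2*t-5)/6 + k*(k+1)*(2*k-5)/6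
def cc (s t k : ℤ) : ℤ := Int.fdiv (bin3 (s+3) - s * dtk t k - 6 - 3*(s-t-k-1)/2 + gtk t k) (s-1)
def dd (s t k : ℤ) : ℤ := bin3 (s+3) - s * dtk t k - 6 - 3*(s-t-k-1)/2 + gtk t k - (s-1) * cc s t k
def gg (s t k : ℤ) : ℤ := cc s t k - 3 - 3*(s-t-k-1)/2

/-! Since `gtk (t+1) (k+1) = gtk t k + t² + k² - 2` and the last summand of the upper bound is at
most `3(t+k+7)`, the hypotheses force `gg y t k ≤ t² + k² + 3(t+k) + 18 ≈ 2t²`. On the other hand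
`cc y t k` is the floor of an explicit cubic in `y` divided by `y - 1`, so
`gg y t k ≈ y²/6 - (t² + k²)/2 ≈ y²/6 - t²`, which is larger once `y² > 18t²` up to lower order
terms; the margin left by `(y+1)² > 20t²` absorbs these for `t ≥ 27`. -/

lemma six_dvd_mul_sub_one_mul_sub_two (n : ℤ) : 6 ∣ n * (n - 1) * (n - 2) := by
  apply (ZMod.intCast_zmod_eq_zero_iff_dvd _ 6).mp
  push_cast
  generalize (n : ZMod 6) = m
  revert m
  decide

lemma six_dvd_mul_add_one_mul_two_mul_sub_five (n : ℤ) : 6 ∣ n * (n + 1) * (2 * n - 5) := by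
  apply (ZMod.intCast_zmod_eq_zero_iff_dvd _ 6).mp
  push_cast
  generalize (n : ZMod 6) = m
  revert m
  decide

lemma six_mul_bin3 (n : ℤ) : 6 * bin3 n = n * (n - 1) * (n - 2) :=
  Int.mul_ediv_cancel' (six_dvd_mul_sub_one_mul_sub_two n)

lemma two_mul_dtk (t k : ℤ) : 2 * dtk t k = t * (t + 1) + k * (k + 1) := by
  have ht := Int.mul_ediv_cancel' (Int.even_mul_succ_self t).two_dvd
  have hk := Int.mul_ediv_cancel' (Int.even_mul_succ_self k).two_dvd
  unfold dtk
  linear_combination ht + hk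

lemma six_mul_gtk (t k : ℤ) :
    6 * gtk t k = 12 + t * (t + 1) * (2 * t - 5) + k * (k + 1) * (2 * k - 5) := by
  have ht := Int.mul_ediv_cancel' (six_dvd_mul_add_one_mul_two_mul_sub_five t)
  have hk := Int.mul_ediv_cancel' (six_dvd_mul_add_one_mul_two_mul_sub_five k)
  unfold gtk
  linear_combination ht + hk

lemma gtk_add_one_add_one (t k : ℤ) : gtk (t + 1) (k + 1) = gtk t k + t ^ 2 + k ^ 2 - 2 := by
  linarith [six_mul_gtk (t + 1) (k + 1), six_mul_gtk t k]

def ccNum (s t k : ℤ) : ℤ := bin3 (s + 3) - s * dtk t k - 6 - 3 * (s - t - k - 1) / 2 + gtk t k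

section Division

variable {s : ℤ} (t k : ℤ)

lemma dd_eq_emod (hs : 1 < s) : dd s t k = ccNum s t k % (s - 1) := by
  rw [Int.emod_def, ← Int.fdiv_eq_ediv_of_nonneg _ (by omega)]
  rfl

lemma mul_cc_le_ccNum (hs : 1 < s) : (s - 1) * cc s t k ≤ ccNum s t k := by
  have h : 0 ≤ dd s t k := dd_eq_emod t k hs ▸ Int.emod_nonneg _ (by omega)
  unfold dd at h
  exact sub_nonneg.mp h

lemma ccNum_lt_mul_cc_add_one (hs : 1 < s) : ccNum s t k < (s - 1) * (cc s t k + 1) := by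
  have h : dd s t k < s - 1 := dd_eq_emod t k hs ▸ Int.emod_lt_of_pos _ (by omega)
  unfold dd at h
  unfold ccNum
  linarith

end Division

lemma six_mul_ccNum {s t k : ℤ} (h : 2 ∣ s - t - k - 1) :
    6 * ccNum s t k = (s + 3) * (s + 2) * (s + 1) - 3 * s * (t * (t + 1) + k * (k + 1)) - 24
      - 9 * (s - t - k - 1) + t * (t + 1) * (2 * t - 5) + k * (k + 1) * (2 * k - 5) := by
  have hhalf : 2 * (3 * (s - t - k - 1) / 2) = 3 * (s - t - k - 1) := by omega
  unfold ccNum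
  linear_combination six_mul_bin3 (s + 3) - 3 * s * two_mul_dtk t k - 3 * hhalf + six_mul_gtk t k

lemma gg_add_seven_le {t k : ℤ} (ht : 0 ≤ t) (hk : k = t - 1 ∨ k = t) :
    gg (t + k + 7) (t + 1) (k + 1) ≤ 3 * (t + k + 7) := by
  have hs : 1 < t + k + 7 := by omega
  have hpar : (2 : ℤ) ∣ t + k + 7 - (t + 1) - (k + 1) - 1 := ⟨2, by ring⟩
  have hc := mul_cc_le_ccNum (t + 1) (k + 1) hs
  have hN := six_mul_ccNum hpar
  unfold gg
  by_contra! hlt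
  have hc' : (t + k + 6) * (3 * (t + k + 7) + 10)
      ≤ (t + k + 6) * cc (t + k + 7) (t + 1) (k + 1) :=
    mul_le_mul_of_nonneg_left (by omega) (by omega)
  rcases hk with rfl | rfl <;> nlinarith

lemma mul_le_six_mul_ccNum {t k y : ℤ} (ht : 27 ≤ t) (hk : k = t - 1 ∨ k = t)
    (hy : t + k + 5 ≤ y) (hpar : 2 ∣ y - t - k - 1) (h : 20 * t ^ 2 < (y + 1) ^ 2) :
    (y - 1) * (6 * (t ^ 2 + k ^ 2 + 3 * (t + k)) + 132 + 9 * (y - t - k - 1))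
      ≤ 6 * ccNum y t k := by
  rw [six_mul_ccNum hpar]
  have hA : 0 ≤ y * ((y + 1) ^ 2 - 20 * t ^ 2 - 1) := mul_nonneg (by omega) (by linarith)
  have hB : 0 ≤ (t - 27) * (y - t - k - 5) := mul_nonneg (by omega) (by omega)
  have hC : 0 ≤ (t - 27) * (y - t - k - 5) * y := mul_nonneg hB (by omega)
  rcases hk with rfl | rfl <;> nlinarith

lemma gg_gt_of_lt_sq {t k y : ℤ} (ht : 27 ≤ t) (hk : k = t - 1 ∨ k = t)
    (hy : t + k + 5 ≤ y) (hpar : 2 ∣ y - t - k - 1) (h : 20 * t ^ 2 < (y + 1) ^ 2) :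
    t ^ 2 + k ^ 2 + 3 * (t + k) + 18 < gg y t k := by
  by_contra! hle
  have hcc : 6 * (cc y t k + 1)
      ≤ 6 * (t ^ 2 + k ^ 2 + 3 * (t + k)) + 132 + 9 * (y - t - k - 1) := by
    unfold gg at hle
    omega
  have hmul := mul_le_mul_of_nonneg_left hcc (by omega : (0 : ℤ) ≤ y - 1)
  have hN := mul_le_six_mul_ccNum ht hk hy hpar h
  have hc := ccNum_lt_mul_cc_add_one t k (by omega : 1 < y)
  linarith

theorem stmt17 (t k y g : ℤ) (ht : 27 ≤ t) (hk : k = t - 1 ∨ k = t)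
    (hy : t + k + 5 ≤ y) (hpar : (2:ℤ) ∣ (y - (t+k-1)))
    (hg1 : gtk t k + gg y t k ≤ g)
    (hg2 : g ≤ -1 + gtk (t+1) (k+1) + gg (t+k+7) (t+1) (k+1)) :
    (y+1)^2 ≤ 20 * t^2 := by
  by_contra! hy_large
  have hleft := gg_gt_of_lt_sq ht hk hy (by omega) hy_large
  have hright := gg_add_seven_le (by omega) hk
  linarith [gtk_add_one_add_one t k]
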